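/- arXiv:1602.07886 — 4 statements merged into one kernel-verified Lean document; each statement's English description precedes it below -/
import Mathlib

section
/- Let q ∈ (0,1), p > 2, A, B, C, λ > 0 be real numbers, and suppose λC < m(t_max), where m(t) = A t^{1+q} − B t^{p−1+q} and t_max = ((1+q)A/((p−1+q)B))^{1/(p−2)}. Define φ : (0,∞) → ℝ by φ(t) = (A/2)t² − (λC/(1−q)) t^{1−q} − (B/p) t^{p}. Then φ has exactly two critical points t₁ < t₂ in (0,∞); they satisfy t₁ < t_max < t₂, φ″(t₁) > 0 and φ″(t₂) < 0, and φ is strictly decreasing on (0,t₁), strictly increasing on (t₁,t₂), and strictly decreasing on (t₂,∞). -/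
/-!
Since `φ'(t) = t^(-q) (m(t) - λC)`, the critical points of `φ` are the solutions of `m(t) = λC`
and `φ'` has the sign of `m - λC`. The profile `m` vanishes at `0`, increases on `[0, t_max]`,
decreases afterwards and eventually becomes negative, so the level `λC ∈ (0, m(t_max))` is
crossed exactly once on each side of `t_max`. At a crossing `φ'' = t^(-q) m'`, whose sign is that
of `t_max - t`.
-/

open Real Set

lemma strictMonoOn_of_hasDerivAt_pos {D : Set ℝ} (hD : Convex ℝ D) (hDo : IsOpen D)
    {f f' : ℝ → ℝ} (hf : ∀ x ∈ D, HasDerivAt f (f' x) x) (hf' : ∀ x ∈ D, 0 < f' x) :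
    StrictMonoOn f D :=
  strictMonoOn_of_hasDerivWithinAt_pos hD (fun x hx ↦ (hf x hx).continuousAt.continuousWithinAt)
    (by rw [hDo.interior_eq]; exact fun x hx ↦ (hf x hx).hasDerivWithinAt)
    (by rwa [hDo.interior_eq])

lemma strictAntiOn_of_hasDerivAt_neg {D : Set ℝ} (hD : Convex ℝ D) (hDo : IsOpen D)
    {f f' : ℝ → ℝ} (hf : ∀ x ∈ D, HasDerivAt f (f' x) x) (hf' : ∀ x ∈ D, f' x < 0) :
    StrictAntiOn f D :=
  strictAntiOn_of_hasDerivWithinAt_neg hD (fun x hx ↦ (hf x hx).continuousAt.continuousWithinAt)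
    (by rw [hDo.interior_eq]; exact fun x hx ↦ (hf x hx).hasDerivWithinAt)
    (by rwa [hDo.interior_eq])

lemma exists_two_crossings_of_unimodal {m : ℝ → ℝ} {T c : ℝ} (hT : 0 ≤ T)
    (hm : ContinuousOn m (Ici 0)) (hinc : StrictMonoOn m (Icc 0 T))
    (hdec : StrictAntiOn m (Ici T)) (h0 : m 0 < c) (hcT : c < m T)
    (hS : ∃ S, T ≤ S ∧ m S < c) :
    ∃ t₁ t₂, 0 < t₁ ∧ t₁ < T ∧ T < t₂ ∧ m t₁ = c ∧ m t₂ = c ∧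
      (∀ t, 0 < t → m t = c → t = t₁ ∨ t = t₂) ∧
      (∀ t ∈ Ioo 0 t₁, m t < c) ∧ (∀ t ∈ Ioo t₁ t₂, c < m t) ∧
      ∀ t ∈ Ioi t₂, m t < c := by
  obtain ⟨S, hTS, hmS⟩ := hS
  obtain ⟨t₁, ⟨ht₁0, ht₁T⟩, hmt₁⟩ := intermediate_value_Icc hT
    (hm.mono fun x hx ↦ hx.1) ⟨h0.le, hcT.le⟩
  obtain ⟨t₂, ⟨hTt₂, -⟩, hmt₂⟩ := intermediate_value_Icc' hTS
    (hm.mono fun x hx ↦ hT.trans hx.1) ⟨hmS.le, hcT.le⟩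
  have ht₁0 : 0 < t₁ := ht₁0.lt_of_ne (by rintro rfl; exact h0.ne hmt₁)
  have ht₁T : t₁ < T := ht₁T.lt_of_ne (by rintro rfl; exact hcT.ne' hmt₁)
  have hTt₂ : T < t₂ := hTt₂.lt_of_ne (by rintro rfl; exact hcT.ne' hmt₂)
  have below₁ : ∀ t ∈ Ioo 0 t₁, m t < c := fun t ⟨ht0, htt₁⟩ ↦
    hmt₁ ▸ hinc ⟨ht0.le, (htt₁.trans ht₁T).le⟩ ⟨ht₁0.le, ht₁T.le⟩ htt₁
  have above : ∀ t ∈ Ioo t₁ t₂, c < m t := by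
    rintro t ⟨ht₁t, htt₂⟩
    rcases le_total t T with htT | hTt
    · exact hmt₁ ▸ hinc ⟨ht₁0.le, ht₁T.le⟩ ⟨(ht₁0.trans ht₁t).le, htT⟩ ht₁t
    · exact hmt₂ ▸ hdec hTt hTt₂.le htt₂
  have below₂ : ∀ t ∈ Ioi t₂, m t < c := fun t ht ↦
    hmt₂ ▸ hdec hTt₂.le (hTt₂.trans ht).le ht
  refine ⟨t₁, t₂, ht₁0, ht₁T, hTt₂, hmt₁, hmt₂, fun t ht hmt ↦ ?_,
    below₁, above, below₂⟩
  rcases lt_trichotomy t t₁ with h₁ | h₁ | h₁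
  · exact absurd (below₁ t ⟨ht, h₁⟩) hmt.not_lt
  · exact .inl h₁
  rcases lt_trichotomy t t₂ with h₂ | h₂ | h₂
  · exact absurd (above t ⟨h₁, h₂⟩) hmt.not_gt
  · exact .inr h₂
  · exact absurd (below₂ t h₂) hmt.not_lt

section RpowDiff

variable {A B a b : ℝ}

/-- The paper's `m` is `rpowDiff A B (1 + q) (p - 1 + q)`. -/
noncomputable def rpowDiff (A B a b t : ℝ) : ℝ := A * t ^ a - B * t ^ b

/-- The unique positive zero of the derivative of `rpowDiff A B a b` (the paper's `t_max`). -/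
noncomputable def rpowDiffPeak (A B a b : ℝ) : ℝ := (a * A / (b * B)) ^ (1 / (b - a))

lemma continuous_rpowDiff (ha : 0 < a) (hb : 0 < b) : Continuous (rpowDiff A B a b) := by
  unfold rpowDiff
  fun_prop (disch := positivity)

lemma rpowDiff_zero (ha : 0 < a) (hb : 0 < b) : rpowDiff A B a b 0 = 0 := by
  simp [rpowDiff, zero_rpow ha.ne', zero_rpow hb.ne']

lemma hasDerivAt_rpowDiff {t : ℝ} (ht : 0 < t) :
    HasDerivAt (rpowDiff A B a b) (t ^ (a - 1) * (a * A - b * B * t ^ (b - a))) t := by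
  refine (((hasDerivAt_rpow_const (.inl ht.ne')).const_mul A).sub
    ((hasDerivAt_rpow_const (.inl ht.ne')).const_mul B)).congr_deriv ?_
  rw [show b - 1 = (a - 1) + (b - a) by ring, rpow_add ht]
  ring

lemma rpowDiffPeak_nonneg (ha : 0 < a) (hab : a < b) (hA : 0 < A) (hB : 0 < B) :
    0 ≤ rpowDiffPeak A B a b :=
  rpow_nonneg (div_nonneg (mul_pos ha hA).le (mul_pos (ha.trans hab) hB).le) _

lemma lt_rpowDiffPeak_iff (ha : 0 < a) (hab : a < b) (hA : 0 < A) (hB : 0 < B)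
    {t : ℝ} (ht : 0 ≤ t) :
    t < rpowDiffPeak A B a b ↔ b * B * t ^ (b - a) < a * A := by
  have hbB : 0 < b * B := mul_pos (ha.trans hab) hB
  have hbase : 0 ≤ a * A / (b * B) := div_nonneg (mul_pos ha hA).le hbB.le
  rw [rpowDiffPeak, one_div, lt_rpow_inv_iff_of_pos ht hbase (by linarith), lt_div_iff₀ hbB,
    mul_comm (t ^ (b - a))]

lemma rpowDiffPeak_lt_iff (ha : 0 < a) (hab : a < b) (hA : 0 < A) (hB : 0 < B)
    {t : ℝ} (ht : 0 ≤ t) :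
    rpowDiffPeak A B a b < t ↔ a * A < b * B * t ^ (b - a) := by
  have hbB : 0 < b * B := mul_pos (ha.trans hab) hB
  have hbase : 0 ≤ a * A / (b * B) := div_nonneg (mul_pos ha hA).le hbB.le
  rw [rpowDiffPeak, one_div, rpow_inv_lt_iff_of_pos hbase ht (by linarith), div_lt_iff₀ hbB,
    mul_comm (t ^ (b - a))]

lemma strictMonoOn_rpowDiff (ha : 0 < a) (hab : a < b) (hA : 0 < A) (hB : 0 < B) :
    StrictMonoOn (rpowDiff A B a b) (Icc 0 (rpowDiffPeak A B a b)) := by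
  refine strictMonoOn_of_deriv_pos (convex_Icc _ _)
    (continuous_rpowDiff ha (ha.trans hab)).continuousOn fun t ht ↦ ?_
  rw [interior_Icc] at ht
  rw [(hasDerivAt_rpowDiff ht.1).deriv]
  exact mul_pos (rpow_pos_of_pos ht.1 _)
    (sub_pos.2 ((lt_rpowDiffPeak_iff ha hab hA hB ht.1.le).1 ht.2))

lemma strictAntiOn_rpowDiff (ha : 0 < a) (hab : a < b) (hA : 0 < A) (hB : 0 < B) :
    StrictAntiOn (rpowDiff A B a b) (Ici (rpowDiffPeak A B a b)) := by
  refine strictAntiOn_of_deriv_neg (convex_Ici _)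
    (continuous_rpowDiff ha (ha.trans hab)).continuousOn fun t ht ↦ ?_
  rw [interior_Ici] at ht
  have ht0 : 0 < t := (rpowDiffPeak_nonneg ha hab hA hB).trans_lt ht
  rw [(hasDerivAt_rpowDiff ht0).deriv]
  exact mul_neg_of_pos_of_neg (rpow_pos_of_pos ht0 _)
    (sub_neg.2 ((rpowDiffPeak_lt_iff ha hab hA hB ht0.le).1 ht))

lemma exists_rpowDiff_nonpos (ha : 0 < a) (hab : a < b) (hA : 0 ≤ A) (hB : 0 < B) (T : ℝ) :
    ∃ S, T ≤ S ∧ rpowDiff A B a b S ≤ 0 := by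
  set R := (A / B) ^ (1 / (b - a))
  have hAB : 0 ≤ A / B := div_nonneg hA hB.le
  have hR : 0 ≤ R := rpow_nonneg hAB _
  refine ⟨max T R, le_max_left _ _, ?_⟩
  set S := max T R
  have hS : 0 ≤ S := hR.trans (le_max_right _ _)
  have hBS : A ≤ B * S ^ (b - a) := by
    rw [← div_le_iff₀' hB]
    calc A / B = R ^ (b - a) := by
          rw [← rpow_mul hAB, one_div_mul_cancel (by linarith), rpow_one]
      _ ≤ S ^ (b - a) := rpow_le_rpow hR (le_max_right _ _) (by linarith)
  have hSb : S ^ b = S ^ a * S ^ (b - a) := by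
    rw [← rpow_add' hS (by linarith), add_sub_cancel]
  rw [rpowDiff, hSb]
  nlinarith [rpow_nonneg hS a]

end RpowDiff

lemma HasDerivAt.mul_sub_const_of_eq {g f : ℝ → ℝ} {g' f' c t : ℝ} (hg : HasDerivAt g g' t)
    (hf : HasDerivAt f f' t) (hc : f t = c) :
    HasDerivAt (fun s ↦ g s * (f s - c)) (g t * f') t :=
  (hg.mul (hf.sub_const c)).congr_deriv (by rw [hc, sub_self, mul_zero, zero_add])

section Fibering

variable {q p A B c : ℝ}

/-- The fibering map `t ↦ I_λ(t u)`; `A = ‖u‖²`, `B = ∫ |u|^p`, `c = λ ∫ a |u|^(1-q)`. -/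
noncomputable def fibering (q p A B c t : ℝ) : ℝ :=
  A / 2 * t ^ 2 - c / (1 - q) * t ^ (1 - q) - B / p * t ^ p

lemma hasDerivAt_fibering (hq : q ≠ 1) (hp : p ≠ 0) {t : ℝ} (ht : 0 < t) :
    HasDerivAt (fibering q p A B c) (t ^ (-q) * (rpowDiff A B (1 + q) (p - 1 + q) t - c)) t := by
  refine ((((hasDerivAt_pow 2 t).const_mul (A / 2)).sub
    ((hasDerivAt_rpow_const (p := 1 - q) (.inl ht.ne')).const_mul (c / (1 - q)))).sub
    ((hasDerivAt_rpow_const (p := p) (.inl ht.ne')).const_mul (B / p))).congr_deriv ?_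
  have e₁ : t ^ (-q) * t ^ (1 + q) = t := by
    rw [← rpow_add ht, show -q + (1 + q) = 1 by ring, rpow_one]
  have e₂ : t ^ (-q) * t ^ (p - 1 + q) = t ^ (p - 1) := by
    rw [← rpow_add ht, show -q + (p - 1 + q) = p - 1 by ring]
  have hq' : 1 - q ≠ 0 := sub_ne_zero.2 hq.symm
  rw [rpowDiff, show 1 - q - 1 = -q by ring]
  field_simp
  norm_num
  linear_combination 2 * B * e₂ - 2 * A * e₁

lemma deriv_fibering_eq_zero_iff (hq : q ≠ 1) (hp : p ≠ 0) {t : ℝ} (ht : 0 < t) :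
    deriv (fibering q p A B c) t = 0 ↔ rpowDiff A B (1 + q) (p - 1 + q) t = c := by
  rw [(hasDerivAt_fibering hq hp ht).deriv, mul_eq_zero, sub_eq_zero,
    or_iff_right (rpow_pos_of_pos ht _).ne']

lemma strictAntiOn_fibering (hq : q ≠ 1) (hp : p ≠ 0) {D : Set ℝ} (hD : Convex ℝ D)
    (hDo : IsOpen D) (hD0 : D ⊆ Ioi 0)
    (hlt : ∀ t ∈ D, rpowDiff A B (1 + q) (p - 1 + q) t < c) :
    StrictAntiOn (fibering q p A B c) D :=
  strictAntiOn_of_hasDerivAt_neg hD hDo (fun _ ht ↦ hasDerivAt_fibering hq hp (hD0 ht))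
    fun t ht ↦ mul_neg_of_pos_of_neg (rpow_pos_of_pos (hD0 ht) _) (sub_neg.2 (hlt t ht))

lemma strictMonoOn_fibering (hq : q ≠ 1) (hp : p ≠ 0) {D : Set ℝ} (hD : Convex ℝ D)
    (hDo : IsOpen D) (hD0 : D ⊆ Ioi 0)
    (hgt : ∀ t ∈ D, c < rpowDiff A B (1 + q) (p - 1 + q) t) :
    StrictMonoOn (fibering q p A B c) D :=
  strictMonoOn_of_hasDerivAt_pos hD hDo (fun _ ht ↦ hasDerivAt_fibering hq hp (hD0 ht))
    fun t ht ↦ mul_pos (rpow_pos_of_pos (hD0 ht) _) (sub_pos.2 (hgt t ht))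

/-- At a critical point, `φ'' = t^(-q) m'(t)`, since `φ' = t^(-q) (m - c)` and `m t = c`. -/
lemma deriv_deriv_fibering_of_eq (hq : q ≠ 1) (hp : p ≠ 0) {t : ℝ} (ht : 0 < t)
    (hc : rpowDiff A B (1 + q) (p - 1 + q) t = c) :
    deriv (deriv (fibering q p A B c)) t =
      t ^ (-q) * (t ^ (1 + q - 1) *
        ((1 + q) * A - (p - 1 + q) * B * t ^ (p - 1 + q - (1 + q)))) := by
  have hderiv : deriv (fibering q p A B c)
      =ᶠ[nhds t] fun s ↦ s ^ (-q) * (rpowDiff A B (1 + q) (p - 1 + q) s - c) :=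
    Filter.eventually_of_mem (Ioi_mem_nhds ht) fun s hs ↦ (hasDerivAt_fibering hq hp hs).deriv
  rw [hderiv.deriv_eq]
  exact ((hasDerivAt_rpow_const (.inl ht.ne')).mul_sub_const_of_eq
    (hasDerivAt_rpowDiff ht) hc).deriv

lemma deriv_deriv_fibering_pos (hq0 : 0 < q) (hq1 : q < 1) (hp : 2 < p) (hA : 0 < A) (hB : 0 < B)
    {t : ℝ} (ht : 0 < t) (hc : rpowDiff A B (1 + q) (p - 1 + q) t = c)
    (htT : t < rpowDiffPeak A B (1 + q) (p - 1 + q)) :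
    0 < deriv (deriv (fibering q p A B c)) t := by
  rw [deriv_deriv_fibering_of_eq hq1.ne (by linarith) ht hc]
  exact mul_pos (rpow_pos_of_pos ht _) (mul_pos (rpow_pos_of_pos ht _)
    (sub_pos.2 ((lt_rpowDiffPeak_iff (by linarith) (by linarith) hA hB ht.le).1 htT)))

lemma deriv_deriv_fibering_neg (hq0 : 0 < q) (hq1 : q < 1) (hp : 2 < p) (hA : 0 < A) (hB : 0 < B)
    {t : ℝ} (ht : 0 < t) (hc : rpowDiff A B (1 + q) (p - 1 + q) t = c)
    (hTt : rpowDiffPeak A B (1 + q) (p - 1 + q) < t) :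
    deriv (deriv (fibering q p A B c)) t < 0 := by
  rw [deriv_deriv_fibering_of_eq hq1.ne (by linarith) ht hc]
  exact mul_neg_of_pos_of_neg (rpow_pos_of_pos ht _) (mul_neg_of_pos_of_neg (rpow_pos_of_pos ht _)
    (sub_neg.2 ((rpowDiffPeak_lt_iff (by linarith) (by linarith) hA hB ht.le).1 hTt)))

end Fibering

/-- For `0 < q < 1`, `p > 2`, `A, B, C, λ > 0` with `λ C < m t_max`, where
`m t = A t^(1+q) - B t^(p-1+q)` and `t_max = ((1+q)A/((p-1+q)B))^(1/(p-2))`, the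
fibering map `φ t = (A/2) t² - (λC/(1-q)) t^(1-q) - (B/p) t^p` has exactly two
critical points `t₁ < t_max < t₂` in `(0, ∞)`, with `φ'' t₁ > 0`, `φ'' t₂ < 0`,
and `φ` is strictly decreasing on `(0,t₁)`, strictly increasing on `(t₁,t₂)` and
strictly decreasing on `(t₂,∞)`. -/
theorem stmt_2 (q p A B C lam : ℝ) (hq0 : 0 < q) (hq1 : q < 1) (hp : 2 < p)
    (hA : 0 < A) (hB : 0 < B) (hC : 0 < C) (hlam : 0 < lam)
    (m : ℝ → ℝ) (hm : ∀ t : ℝ, m t = A * t ^ (1 + q) - B * t ^ (p - 1 + q))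
    (tmax : ℝ) (htmax : tmax = ((1 + q) * A / ((p - 1 + q) * B)) ^ (1 / (p - 2)))
    (hsmall : lam * C < m tmax)
    (φ : ℝ → ℝ)
    (hφ : ∀ t : ℝ, φ t = A / 2 * t ^ 2 - lam * C / (1 - q) * t ^ (1 - q) - B / p * t ^ p) :
    ∃ t₁ t₂ : ℝ, 0 < t₁ ∧ t₁ < tmax ∧ tmax < t₂ ∧
      deriv φ t₁ = 0 ∧ deriv φ t₂ = 0 ∧
      (∀ t : ℝ, 0 < t → deriv φ t = 0 → t = t₁ ∨ t = t₂) ∧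
      0 < deriv (deriv φ) t₁ ∧ deriv (deriv φ) t₂ < 0 ∧
      StrictAntiOn φ (Set.Ioo 0 t₁) ∧ StrictMonoOn φ (Set.Ioo t₁ t₂) ∧
      StrictAntiOn φ (Set.Ioi t₂) := by
  obtain rfl : m = rpowDiff A B (1 + q) (p - 1 + q) := funext hm
  obtain rfl : tmax = rpowDiffPeak A B (1 + q) (p - 1 + q) := by
    rw [htmax, rpowDiffPeak, show p - 1 + q - (1 + q) = p - 2 by ring]
  obtain rfl : φ = fibering q p A B (lam * C) := funext hφ
  have ha : 0 < 1 + q := by linarith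
  have hab : 1 + q < p - 1 + q := by linarith
  have hp0 : p ≠ 0 := by linarith
  obtain ⟨t₁, t₂, ht₁, ht₁T, hTt₂, hm₁, hm₂, huniq, hlt₁, hgt, hlt₂⟩ :=
    exists_two_crossings_of_unimodal (rpowDiffPeak_nonneg ha hab hA hB)
      (continuous_rpowDiff ha (ha.trans hab)).continuousOn (strictMonoOn_rpowDiff ha hab hA hB)
      (strictAntiOn_rpowDiff ha hab hA hB)
      (by rw [rpowDiff_zero ha (ha.trans hab)]; positivity) hsmall
      ((exists_rpowDiff_nonpos ha hab hA.le hB _).imp fun _ hS ↦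
        ⟨hS.1, hS.2.trans_lt (by positivity)⟩)
  have ht₂ : 0 < t₂ := ht₁.trans (ht₁T.trans hTt₂)
  refine ⟨t₁, t₂, ht₁, ht₁T, hTt₂,
    (deriv_fibering_eq_zero_iff hq1.ne hp0 ht₁).2 hm₁,
    (deriv_fibering_eq_zero_iff hq1.ne hp0 ht₂).2 hm₂,
    fun t ht h ↦ huniq t ht ((deriv_fibering_eq_zero_iff hq1.ne hp0 ht).1 h),
    deriv_deriv_fibering_pos hq0 hq1 hp hA hB ht₁ hm₁ ht₁T,
    deriv_deriv_fibering_neg hq0 hq1 hp hA hB ht₂ hm₂ hTt₂,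
    strictAntiOn_fibering hq1.ne hp0 (convex_Ioo _ _) isOpen_Ioo Ioo_subset_Ioi_self hlt₁,
    strictMonoOn_fibering hq1.ne hp0 (convex_Ioo _ _) isOpen_Ioo
      (Ioo_subset_Ioi_self.trans (Ioi_subset_Ioi ht₁.le)) hgt,
    strictAntiOn_fibering hq1.ne hp0 (convex_Ioi _) isOpen_Ioi (Ioi_subset_Ioi ht₂.le) hlt₂⟩
end

section
/- Let p > 2 and A, B, C, λ > 0 be real numbers, and define φ : (0,∞) → ℝ by φ(t) = (A/2)t² − λC ln t − (B/p) t^{p}. Then φ(t) → +∞ as t → 0⁺ and φ(t) → −∞ as t → ∞. Moreover, setting m̃(t) = A t² − B t^{p} and t̃ = (2A/(pB))^{1/(p−2)}, if λC < m̃(t̃) then φ has exactly two critical points t₁ < t₂ in (0,∞), with φ″(t₁) > 0 and φ″(t₂) < 0. -/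
/-!
Writing `m̃ t = A t² - B t^p`, one has `φ' t = (m̃ t - λC) / t` on `(0, ∞)`, and
`m̃' t = t (2A - pB t^(p-2))` changes sign exactly once, at `t̃`. So `m̃` rises from
`m̃ 0 = 0 < λC` to its maximum `m̃ t̃ > λC` and then decreases to `-∞`: it takes the value
`λC` exactly twice, once on each side of `t̃`. At a critical point `φ'' t = m̃' t / t`, which
is positive before `t̃` and negative after it.
-/

open Real Set Filter Topology

noncomputable section

-- `c` stands for `λ C`.
def fiberingMap (A B c p : ℝ) (t : ℝ) : ℝ :=
  A / 2 * t ^ 2 - c * Real.log t - B / p * t ^ p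

def mTilde (A B p : ℝ) (t : ℝ) : ℝ :=
  A * t ^ 2 - B * t ^ p

def mTildePeak (A B p : ℝ) : ℝ :=
  (2 * A / (p * B)) ^ (1 / (p - 2))

end

theorem exists_two_eq_of_strictMonoOn_of_strictAntiOn {f : ℝ → ℝ} {a c : ℝ} (ha0 : 0 ≤ a)
    (hf : ContinuousOn f (Ici 0)) (hmono : StrictMonoOn f (Icc 0 a))
    (hanti : StrictAntiOn f (Ici a)) (h0 : f 0 < c) (ha : c < f a)
    (hbot : Tendsto f atTop atBot) :
    ∃ t₁ t₂, 0 < t₁ ∧ t₁ < a ∧ a < t₂ ∧ f t₁ = c ∧ f t₂ = c ∧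
      ∀ t, 0 ≤ t → f t = c → t = t₁ ∨ t = t₂ := by
  obtain ⟨t₁, ⟨h0t₁, ht₁a⟩, hft₁⟩ :=
    intermediate_value_Ioo ha0 (hf.mono Icc_subset_Ici_self) ⟨h0, ha⟩
  obtain ⟨b, hbc, hab⟩ := ((hbot.eventually_lt_atBot c).and (eventually_gt_atTop a)).exists
  obtain ⟨t₂, ⟨hat₂, -⟩, hft₂⟩ :=
    intermediate_value_Ioo' hab.le (hf.mono ((Icc_subset_Ici_iff hab.le).2 ha0)) ⟨hbc, ha⟩
  refine ⟨t₁, t₂, h0t₁, ht₁a, hat₂, hft₁, hft₂, fun t ht hft => ?_⟩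
  rcases le_total t a with hta | hat
  · exact .inl (hmono.injOn ⟨ht, hta⟩ ⟨h0t₁.le, ht₁a.le⟩ (hft.trans hft₁.symm))
  · exact .inr (hanti.injOn hat hat₂.le (hft.trans hft₂.symm))

section

variable {A B c p t : ℝ}

theorem fiberingMap_eq_mTilde_sub_log :
    fiberingMap A B c p t = mTilde (A / 2) (B / p) p t - c * Real.log t := by
  unfold fiberingMap mTilde
  ring

theorem mTilde_zero (hp : p ≠ 0) : mTilde A B p 0 = 0 := by
  simp [mTilde, zero_rpow hp]

theorem continuous_mTilde (hp : 0 ≤ p) : Continuous (mTilde A B p) := by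
  unfold mTilde
  have := continuous_rpow_const hp
  fun_prop

theorem hasDerivAt_mTilde (ht : 0 < t) :
    HasDerivAt (mTilde A B p) (t * (2 * A - p * B * t ^ (p - 2))) t := by
  have hpow : t ^ (p - 1) = t ^ (p - 2) * t := by
    rw [show p - 1 = p - 2 + 1 by ring, rpow_add_one ht.ne']
  refine (((hasDerivAt_pow 2 t).const_mul A).sub
    ((hasDerivAt_rpow_const (p := p) (.inl ht.ne')).const_mul B)).congr_deriv ?_
  rw [hpow]
  ring

theorem tendsto_mTilde_atTop (hp : 2 < p) (hB : 0 < B) :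
    Tendsto (mTilde A B p) atTop atBot := by
  have hsmall : Tendsto (fun t : ℝ => A * t ^ (2 - p) - B) atTop (𝓝 (-B)) := by
    simpa [neg_sub] using ((tendsto_rpow_neg_atTop (sub_pos.2 hp)).const_mul A).sub_const B
  have hpow : Tendsto (fun t : ℝ => t ^ p) atTop atTop := tendsto_rpow_atTop (by linarith)
  refine (hpow.atTop_mul_neg (neg_neg_of_pos hB) hsmall).congr' ?_
  filter_upwards [eventually_gt_atTop 0] with t ht
  have hsplit : t ^ p * t ^ (2 - p) = t ^ 2 := by
    rw [← rpow_add ht]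
    norm_num
  unfold mTilde
  linear_combination A * hsplit

theorem hasDerivAt_fiberingMap (hp : p ≠ 0) (ht : 0 < t) :
    HasDerivAt (fiberingMap A B c p) ((mTilde A B p t - c) / t) t := by
  have hsplit : t ^ p = t ^ (p - 2) * t ^ 2 := by
    rw [← rpow_natCast, ← rpow_add ht]
    norm_num
  have hfun : fiberingMap A B c p = fun s => mTilde (A / 2) (B / p) p s - c * Real.log s :=
    funext fun _ => fiberingMap_eq_mTilde_sub_log
  rw [hfun]
  refine ((hasDerivAt_mTilde ht).sub ((hasDerivAt_log ht.ne').const_mul c)).congr_deriv ?_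
  unfold mTilde
  rw [hsplit]
  field_simp

theorem deriv_fiberingMap_eq_zero_iff (hp : p ≠ 0) (ht : 0 < t) :
    deriv (fiberingMap A B c p) t = 0 ↔ mTilde A B p t = c := by
  rw [(hasDerivAt_fiberingMap hp ht).deriv, div_eq_zero_iff, sub_eq_zero, or_iff_left ht.ne']

theorem deriv_deriv_fiberingMap (hp : p ≠ 0) (ht : 0 < t) (hcrit : mTilde A B p t = c) :
    deriv (deriv (fiberingMap A B c p)) t = 2 * A - p * B * t ^ (p - 2) := by
  have hloc : deriv (fiberingMap A B c p) =ᶠ[𝓝 t] fun s => (mTilde A B p s - c) / s :=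
    eventually_of_mem (Ioi_mem_nhds ht) fun s hs => (hasDerivAt_fiberingMap hp hs).deriv
  have h : HasDerivAt (fun s => (mTilde A B p s - c) / s) _ t :=
    ((hasDerivAt_mTilde ht).sub_const c).div (hasDerivAt_id' t) ht.ne'
  rw [hloc.deriv_eq, h.deriv, hcrit]
  field_simp
  ring

theorem mTildePeak_pos (hp : 0 < p) (hA : 0 < A) (hB : 0 < B) : 0 < mTildePeak A B p := by
  unfold mTildePeak
  positivity

theorem mTildePeak_rpow_sub_two (hp : 2 < p) (hA : 0 < A) (hB : 0 < B) :
    mTildePeak A B p ^ (p - 2) = 2 * A / (p * B) := by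
  have : 0 < p := by linarith
  rw [mTildePeak, one_div, rpow_inv_rpow (by positivity) (sub_pos.2 hp).ne']

theorem lt_mTildePeak_iff (hp : 2 < p) (hA : 0 < A) (hB : 0 < B) (ht : 0 ≤ t) :
    t < mTildePeak A B p ↔ p * B * t ^ (p - 2) < 2 * A := by
  have hpB : 0 < p * B := mul_pos (by linarith) hB
  rw [← rpow_lt_rpow_iff ht (mTildePeak_pos (by linarith) hA hB).le (sub_pos.2 hp),
    mTildePeak_rpow_sub_two hp hA hB, lt_div_iff₀ hpB, mul_comm (t ^ (p - 2))]

theorem mTildePeak_lt_iff (hp : 2 < p) (hA : 0 < A) (hB : 0 < B) (ht : 0 ≤ t) :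
    mTildePeak A B p < t ↔ 2 * A < p * B * t ^ (p - 2) := by
  have hpB : 0 < p * B := mul_pos (by linarith) hB
  rw [← rpow_lt_rpow_iff (mTildePeak_pos (by linarith) hA hB).le ht (sub_pos.2 hp),
    mTildePeak_rpow_sub_two hp hA hB, div_lt_iff₀ hpB, mul_comm (t ^ (p - 2))]

theorem strictMonoOn_mTilde (hp : 2 < p) (hA : 0 < A) (hB : 0 < B) :
    StrictMonoOn (mTilde A B p) (Icc 0 (mTildePeak A B p)) := by
  refine strictMonoOn_of_deriv_pos (convex_Icc _ _)
    (continuous_mTilde (by linarith)).continuousOn fun t ht => ?_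
  rw [interior_Icc] at ht
  rw [(hasDerivAt_mTilde ht.1).deriv]
  have := (lt_mTildePeak_iff hp hA hB ht.1.le).1 ht.2
  exact mul_pos ht.1 (by linarith)

theorem strictAntiOn_mTilde (hp : 2 < p) (hA : 0 < A) (hB : 0 < B) :
    StrictAntiOn (mTilde A B p) (Ici (mTildePeak A B p)) := by
  refine strictAntiOn_of_deriv_neg (convex_Ici _)
    (continuous_mTilde (by linarith)).continuousOn fun t ht => ?_
  rw [interior_Ici] at ht
  have ht0 : 0 < t := (mTildePeak_pos (by linarith) hA hB).trans ht
  rw [(hasDerivAt_mTilde ht0).deriv]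
  have := (mTildePeak_lt_iff hp hA hB ht0.le).1 ht
  exact mul_neg_of_pos_of_neg ht0 (by linarith)

theorem tendsto_fiberingMap_nhdsGT_zero (hp : 0 < p) (hc : 0 < c) :
    Tendsto (fiberingMap A B c p) (𝓝[>] 0) atTop := by
  have hm : Tendsto (mTilde (A / 2) (B / p) p) (𝓝[>] 0) (𝓝 0) := by
    simpa [mTilde_zero hp.ne'] using
      ((continuous_mTilde hp.le).tendsto 0).mono_left nhdsWithin_le_nhds
  have hlog : Tendsto (fun t => -c * Real.log t) (𝓝[>] 0) atTop :=
    tendsto_log_nhdsGT_zero.const_mul_atBot_of_neg (neg_neg_of_pos hc)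
  refine (hm.add_atTop hlog).congr fun t => ?_
  rw [fiberingMap_eq_mTilde_sub_log]
  ring

theorem tendsto_fiberingMap_atTop (hp : 2 < p) (hB : 0 < B) (hc : 0 ≤ c) :
    Tendsto (fiberingMap A B c p) atTop atBot := by
  refine tendsto_atBot_mono' atTop ?_
    (tendsto_mTilde_atTop (A := A / 2) hp (div_pos hB (by linarith : (0 : ℝ) < p)))
  filter_upwards [eventually_ge_atTop 1] with t ht
  rw [fiberingMap_eq_mTilde_sub_log]
  linarith [mul_nonneg hc (log_nonneg ht)]

end

/-- For `p > 2` and `A, B, C, λ > 0`, the fibering map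
`φ t = (A/2) t² - λC ln t - (B/p) t^p` satisfies `φ(t) → +∞` as `t → 0⁺` and
`φ(t) → -∞` as `t → ∞`. Moreover, with `m̃ t = A t² - B t^p` and
`t̃ = (2A/(pB))^(1/(p-2))`, if `λC < m̃ t̃` then `φ` has exactly two critical
points `t₁ < t₂` in `(0, ∞)`, with `φ'' t₁ > 0` and `φ'' t₂ < 0`. -/
theorem stmt_3 (p A B C lam : ℝ) (hp : 2 < p)
    (hA : 0 < A) (hB : 0 < B) (hC : 0 < C) (hlam : 0 < lam)
    (φ : ℝ → ℝ)
    (hφ : ∀ t : ℝ, φ t = A / 2 * t ^ 2 - lam * C * Real.log t - B / p * t ^ p)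
    (mt : ℝ → ℝ) (hmt : ∀ t : ℝ, mt t = A * t ^ 2 - B * t ^ p)
    (tt : ℝ) (htt : tt = (2 * A / (p * B)) ^ (1 / (p - 2))) :
    Filter.Tendsto φ (nhdsWithin 0 (Set.Ioi 0)) Filter.atTop ∧
    Filter.Tendsto φ Filter.atTop Filter.atBot ∧
    (lam * C < mt tt →
      ∃ t₁ t₂ : ℝ, 0 < t₁ ∧ t₁ < t₂ ∧
        deriv φ t₁ = 0 ∧ deriv φ t₂ = 0 ∧
        (∀ t : ℝ, 0 < t → deriv φ t = 0 → t = t₁ ∨ t = t₂) ∧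
        0 < deriv (deriv φ) t₁ ∧ deriv (deriv φ) t₂ < 0) := by
  obtain rfl : φ = fiberingMap A B (lam * C) p := funext hφ
  obtain rfl : mt = mTilde A B p := funext hmt
  subst htt
  have hp0 : 0 < p := by linarith
  have hc : 0 < lam * C := mul_pos hlam hC
  refine ⟨tendsto_fiberingMap_nhdsGT_zero hp0 hc, tendsto_fiberingMap_atTop hp hB hc.le,
    fun hlt => ?_⟩
  obtain ⟨t₁, t₂, ht₁, ht₁peak, hpeakt₂, hm₁, hm₂, hunique⟩ :=
    exists_two_eq_of_strictMonoOn_of_strictAntiOn (mTildePeak_pos hp0 hA hB).le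
      (continuous_mTilde hp0.le).continuousOn (strictMonoOn_mTilde hp hA hB)
      (strictAntiOn_mTilde hp hA hB) (by rwa [mTilde_zero hp0.ne']) hlt
      (tendsto_mTilde_atTop hp hB)
  have ht₂ : 0 < t₂ := ht₁.trans (ht₁peak.trans hpeakt₂)
  have hcrit_iff {t : ℝ} (ht : 0 < t) := deriv_fiberingMap_eq_zero_iff (A := A) (B := B)
    (c := lam * C) hp0.ne' ht
  refine ⟨t₁, t₂, ht₁, ht₁peak.trans hpeakt₂, (hcrit_iff ht₁).2 hm₁, (hcrit_iff ht₂).2 hm₂,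
    fun t ht hcrit => hunique t ht.le ((hcrit_iff ht).1 hcrit), ?_, ?_⟩
  · rw [deriv_deriv_fiberingMap hp0.ne' ht₁ hm₁, sub_pos]
    exact (lt_mTildePeak_iff hp hA hB ht₁.le).1 ht₁peak
  · rw [deriv_deriv_fiberingMap hp0.ne' ht₂ hm₂, sub_neg]
    exact (mTildePeak_lt_iff hp hA hB ht₂.le).1 hpeakt₂
end

section
/- Let q ∈ (0,1), m > 0 and ρ ∈ (1, 2] be real numbers. Then there exists a constant K > 0 such that for all real c ≥ m and d ≥ 0: ((c+d)^{1−q} − c^{1−q})/(1−q) − c^{−q} d ≥ −K d^{ρ}. -/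
/-!
With `f x = x ^ (1 - q) / (1 - q)`, the left-hand side is the first-order Taylor remainder
`f (c + d) - f c - f' c * d` of the concave function `f`. Bernoulli's inequality gives the
tangent bounds `f (c + d) - f c ≥ f' (c + d) * d` and, by convexity of `f' = x ^ (-q)`,
`f' c - f' (c + d) ≤ q * c ^ (-q - 1) * d`. Hence the remainder is at least `-m ^ (-q) * d`
and at least `-q * m ^ (-q - 1) * d ^ 2`, and `min d (d ^ 2) ≤ d ^ ρ` for `1 ≤ ρ ≤ 2`.
-/

open Real

lemma rpow_add_le_rpow_add_mul {p x h : ℝ} (hp₀ : 0 ≤ p) (hp₁ : p ≤ 1) (hx : 0 < x)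
    (hxh : 0 ≤ x + h) : (x + h) ^ p ≤ x ^ p + p * x ^ (p - 1) * h := by
  have hs : -1 ≤ h / x := by rw [le_div_iff₀ hx]; linarith
  calc (x + h) ^ p = x ^ p * (1 + h / x) ^ p := by
        rw [← mul_rpow hx.le (by linarith), mul_add, mul_div_cancel₀ _ hx.ne', mul_one]
    _ ≤ x ^ p * (1 + p * (h / x)) :=
        mul_le_mul_of_nonneg_left (rpow_one_add_le_one_add_mul_self hs hp₀ hp₁) (by positivity)
    _ = x ^ p + p * x ^ (p - 1) * h := by
        rw [rpow_sub_one hx.ne']; field_simp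

lemma mul_rpow_neg_le_rpow_sub_rpow {q c d : ℝ} (hq₀ : 0 ≤ q) (hq₁ : q ≤ 1) (hc : 0 < c)
    (hd : 0 ≤ d) : (1 - q) * (c + d) ^ (-q) * d ≤ (c + d) ^ (1 - q) - c ^ (1 - q) := by
  have h := rpow_add_le_rpow_add_mul (p := 1 - q) (h := -d) (by linarith) (by linarith)
    (by linarith : 0 < c + d) (by linarith)
  rw [add_neg_cancel_right, show 1 - q - 1 = -q by ring] at h
  linarith

lemma rpow_neg_sub_rpow_neg_le {q c d : ℝ} (hq₀ : 0 ≤ q) (hq₁ : q ≤ 1) (hc : 0 < c)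
    (hd : 0 ≤ d) : c ^ (-q) - (c + d) ^ (-q) ≤ q * c ^ (-q - 1) * d := by
  have hcd : 0 < c + d := by linarith
  have htangent := rpow_add_le_rpow_add_mul hq₀ hq₁ hc (by linarith : 0 ≤ c + d)
  have hmono : c ^ q ≤ (c + d) ^ q := rpow_le_rpow hc.le (by linarith) hq₀
  have hcq : 0 < c ^ q := rpow_pos_of_pos hc q
  calc c ^ (-q) - (c + d) ^ (-q) = ((c + d) ^ q - c ^ q) / (c ^ q * (c + d) ^ q) := by
        rw [rpow_neg hc.le, rpow_neg hcd.le]; field_simp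
    _ ≤ q * c ^ (q - 1) * d / (c ^ q * c ^ q) := by
        gcongr
        linarith
    _ = q * c ^ (-q - 1) * d := by
        rw [rpow_sub_one hc.ne', rpow_sub_one hc.ne', rpow_neg hc.le]; field_simp

noncomputable def powTaylorRemainder (q c d : ℝ) : ℝ :=
  ((c + d) ^ (1 - q) - c ^ (1 - q)) / (1 - q) - c ^ (-q) * d

section powTaylorRemainder

variable {q c d : ℝ}

lemma rpow_neg_mul_le_rpow_sub_rpow_div (hq₀ : 0 ≤ q) (hq₁ : q < 1) (hc : 0 < c) (hd : 0 ≤ d) :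
    (c + d) ^ (-q) * d ≤ ((c + d) ^ (1 - q) - c ^ (1 - q)) / (1 - q) := by
  rw [le_div_iff₀ (by linarith)]
  linarith [mul_rpow_neg_le_rpow_sub_rpow hq₀ hq₁.le hc hd]

lemma neg_rpow_neg_mul_le_powTaylorRemainder (hq₀ : 0 ≤ q) (hq₁ : q < 1) (hc : 0 < c)
    (hd : 0 ≤ d) : -(c ^ (-q) * d) ≤ powTaylorRemainder q c d := by
  have hsecant := rpow_neg_mul_le_rpow_sub_rpow_div hq₀ hq₁ hc hd
  have : 0 ≤ (c + d) ^ (-q) * d := by positivity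
  unfold powTaylorRemainder
  linarith

lemma neg_mul_sq_le_powTaylorRemainder (hq₀ : 0 ≤ q) (hq₁ : q < 1) (hc : 0 < c)
    (hd : 0 ≤ d) : -(q * c ^ (-q - 1) * d ^ 2) ≤ powTaylorRemainder q c d := by
  have hsecant := rpow_neg_mul_le_rpow_sub_rpow_div hq₀ hq₁ hc hd
  have hderiv := mul_le_mul_of_nonneg_right (rpow_neg_sub_rpow_neg_le hq₀ hq₁.le hc hd) hd
  unfold powTaylorRemainder
  nlinarith

end powTaylorRemainder

lemma min_self_sq_le_rpow {d ρ : ℝ} (hd : 0 ≤ d) (hρ₁ : 1 ≤ ρ) (hρ₂ : ρ ≤ 2) :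
    min d (d ^ 2) ≤ d ^ ρ := by
  rcases le_total d 1 with hd₁ | hd₁
  · rw [← rpow_two]
    exact (min_le_right _ _).trans (rpow_le_rpow_of_exponent_ge' hd hd₁ (by linarith) hρ₂)
  · calc min d (d ^ 2) ≤ d ^ (1 : ℝ) := (min_le_left _ _).trans (rpow_one d).ge
      _ ≤ d ^ ρ := rpow_le_rpow_of_exponent_le hd₁ hρ₁

/-- For `0 < q < 1`, `m > 0` and `1 < ρ ≤ 2` there is a constant `K > 0` such
that for all `c ≥ m` and `d ≥ 0`:
`((c+d)^(1-q) - c^(1-q))/(1-q) - c^(-q) d ≥ -K d^ρ`. -/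
theorem stmt_10 (q m ρ : ℝ) (hq0 : 0 < q) (hq1 : q < 1) (hm : 0 < m)
    (hρ1 : 1 < ρ) (hρ2 : ρ ≤ 2) :
    ∃ K : ℝ, 0 < K ∧ ∀ c d : ℝ, m ≤ c → 0 ≤ d →
      ((c + d) ^ (1 - q) - c ^ (1 - q)) / (1 - q) - c ^ (-q) * d ≥ -K * d ^ ρ := by
  refine ⟨q * m ^ (-q - 1) + m ^ (-q), by positivity, fun c d hcm hd => ?_⟩
  have hc : 0 < c := hm.trans_le hcm
  have hlin := neg_rpow_neg_mul_le_powTaylorRemainder hq0.le hq1 hc hd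
  have hquad := neg_mul_sq_le_powTaylorRemainder hq0.le hq1 hc hd
  have hm₀ : c ^ (-q) ≤ m ^ (-q) := rpow_le_rpow_of_nonpos hm hcm (by linarith)
  have hm₁ : c ^ (-q - 1) ≤ m ^ (-q - 1) := rpow_le_rpow_of_nonpos hm hcm (by linarith)
  have hmin := min_self_sq_le_rpow hd hρ1.le hρ2
  have hK₀ : 0 ≤ m ^ (-q) := by positivity
  have hK₁ : 0 ≤ q * m ^ (-q - 1) := by positivity
  change -_ * d ^ ρ ≤ powTaylorRemainder q c d
  rcases le_total d (d ^ 2) with h | h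
  · rw [min_eq_left h] at hmin
    nlinarith [mul_le_mul_of_nonneg_right hm₀ hd]
  · rw [min_eq_right h] at hmin
    nlinarith [mul_le_mul_of_nonneg_right (mul_le_mul_of_nonneg_left hm₁ hq0.le) (sq_nonneg d)]
end

section
/- Let p > 2 and M > 0 be real numbers. Then there exists a constant K > 0 such that for all real c with 0 ≤ c ≤ M and all real d ≥ 1: (c+d)^{p}/p − c^{p}/p − c^{p−1} d ≥ d^{p}/p + K c d^{p−1}. -/
/-!
Write `(c + d)^p = (c + d)^(p-1) c + (c + d)^(p-1) d`. The tangent line of `x ↦ x^(p-1)` at `c`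
bounds the first summand below by `c^p + (p-1) c^(p-1) d`. For the second, `x ↦ x^(p-1)` is
superadditive with a quantitative gain: expanding around the larger of `c` and `d` gives
`(c + d)^(p-1) ≥ c^(p-1) + d^(p-1) + (p-2) min(c,d) max(c,d)^(p-2)`, and when `c ≤ M` and `d ≥ 1`
this gain dominates `(p-2)/(1+M) · c d^(p-2)`. Adding up gives the claim with
`K = (p-2)/(p(1+M))`.
-/

open Real

namespace Real

lemma rpow_sub_one_mul {x : ℝ} (hx : x ≠ 0) (q : ℝ) : x ^ (q - 1) * x = x ^ q := by
  rw [← rpow_add_one hx, sub_add_cancel]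

lemma rpow_add_mul_rpow_sub_one_mul_le_add_rpow {x y q : ℝ} (hx : 0 < x) (hy : 0 ≤ y)
    (hq : 1 ≤ q) : x ^ q + q * x ^ (q - 1) * y ≤ (x + y) ^ q := by
  have hbernoulli := one_add_mul_self_le_rpow_one_add (by linarith [div_nonneg hy hx.le] :
    (-1 : ℝ) ≤ y / x) hq
  calc x ^ q + q * x ^ (q - 1) * y = x ^ q * (1 + q * (y / x)) := by
        rw [rpow_sub_one hx.ne']; field_simp
    _ ≤ x ^ q * (1 + y / x) ^ q := by gcongr
    _ = (x + y) ^ q := by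
        rw [← mul_rpow hx.le (by positivity), mul_one_add, mul_div_cancel₀ _ hx.ne']

lemma rpow_add_rpow_add_mul_le_add_rpow_of_le {c d q : ℝ} (hc : 0 < c) (hcd : c ≤ d)
    (hq : 1 ≤ q) : c ^ q + d ^ q + (q - 1) * c * d ^ (q - 1) ≤ (c + d) ^ q := by
  have htangent := rpow_add_mul_rpow_sub_one_mul_le_add_rpow (hc.trans_le hcd) hc.le hq
  have hcq : c ^ q ≤ c * d ^ (q - 1) := by
    rw [← rpow_sub_one_mul hc.ne' q, mul_comm]
    gcongr
  rw [add_comm d c] at htangent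
  nlinarith

lemma rpow_add_rpow_add_mul_le_add_rpow {c d M q : ℝ} (hc : 0 < c) (hcM : c ≤ M) (hd : 1 ≤ d)
    (hq : 1 ≤ q) : c ^ q + d ^ q + (q - 1) / (1 + M) * c * d ^ (q - 1) ≤ (c + d) ^ q := by
  rcases le_total c d with hcd | hdc
  · have hsuper := rpow_add_rpow_add_mul_le_add_rpow_of_le hc hcd hq
    have hfactor : (q - 1) / (1 + M) ≤ q - 1 :=
      div_le_self (by linarith) (by linarith)
    have := mul_le_mul_of_nonneg_right hfactor (by positivity : 0 ≤ c * d ^ (q - 1))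
    nlinarith
  · have hsymm := rpow_add_rpow_add_mul_le_add_rpow_of_le (by linarith) hdc hq
    have hgain : (q - 1) / (1 + M) * c ≤ q - 1 := by
      rw [div_mul_eq_mul_div, div_le_iff₀ (by linarith)]
      nlinarith
    have hdq : d ^ (q - 1) ≤ d * c ^ (q - 1) := by
      calc d ^ (q - 1) ≤ d ^ q := rpow_le_rpow_of_exponent_le hd (by linarith)
        _ = d * d ^ (q - 1) := by rw [mul_comm, rpow_sub_one_mul (by positivity)]
        _ ≤ d * c ^ (q - 1) := by gcongr
    have : 0 ≤ d ^ (q - 1) := by positivity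
    rw [add_comm d c, add_right_comm] at hsymm
    nlinarith

end Real

lemma add_rpow_succ_lower_bound {c d M q : ℝ} (hc : 0 < c) (hcM : c ≤ M) (hd : 1 ≤ d)
    (hq : 1 ≤ q) :
    c ^ (q + 1) + d ^ (q + 1) + (q + 1) * (c ^ q * d) + (q - 1) / (1 + M) * (c * d ^ q)
      ≤ (c + d) ^ (q + 1) := by
  have hd0 : 0 < d := by linarith
  have htangent := rpow_add_mul_rpow_sub_one_mul_le_add_rpow hc hd0.le hq
  have hsuper := rpow_add_rpow_add_mul_le_add_rpow hc hcM hd hq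
  have hfirst := mul_le_mul_of_nonneg_right htangent hc.le
  have hsecond := mul_le_mul_of_nonneg_right hsuper hd0.le
  have hcd : 0 < c + d := by linarith
  rw [rpow_add_one hcd.ne', rpow_add_one hc.ne', rpow_add_one hd0.ne']
  have hc' := rpow_sub_one_mul hc.ne' q
  have hd' := rpow_sub_one_mul hd0.ne' q
  linear_combination hfirst + hsecond - (q * d) * hc' - ((q - 1) / (1 + M) * c) * hd'

/-- For `p > 2` and `M > 0` there is a constant `K > 0` such that for all
`0 ≤ c ≤ M` and `d ≥ 1`:
`(c+d)^p/p - c^p/p - c^(p-1) d ≥ d^p/p + K c d^(p-1)`. -/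
theorem stmt_12 (p M : ℝ) (hp : 2 < p) (hM : 0 < M) :
    ∃ K : ℝ, 0 < K ∧ ∀ c d : ℝ, 0 ≤ c → c ≤ M → 1 ≤ d →
      (c + d) ^ p / p - c ^ p / p - c ^ (p - 1) * d ≥ d ^ p / p + K * c * d ^ (p - 1) := by
  obtain ⟨q, rfl⟩ : ∃ q, p = q + 1 := ⟨p - 1, by ring⟩
  have hq : 1 < q := by linarith
  have hq0 : 0 < q + 1 := by linarith
  refine ⟨(q - 1) / ((q + 1) * (1 + M)), by positivity, fun c d hc hcM hd => ?_⟩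
  simp only [add_sub_cancel_right, ge_iff_le]
  rcases hc.eq_or_lt with rfl | hc
  · simp [zero_rpow hq0.ne', zero_rpow (by linarith : q ≠ 0)]
  · have key := add_rpow_succ_lower_bound hc hcM hd hq.le
    rw [← sub_nonneg]
    refine (div_nonneg (sub_nonneg.2 key) hq0.le).trans_eq ?_
    field_simp
    ring
end
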